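/- arXiv:1106.1136 — 2 statements merged into one kernel-verified Lean document; each statement's English description precedes it below -/
import Mathlib

section
/- The group generated by matrix transposition d together with all row transformations R_r for r in the block-respecting subgroup G ≤ S₉ has order 2 · 6⁸. -/
/-- The three Sudoku blocks of `Fin 9`: `{0,1,2}, {3,4,5}, {6,7,8}`. -/
def sBlock (k : Fin 3) : Set (Fin 9) := {x | (x : ℕ) / 3 = (k : ℕ)}

/-- A permutation of `Fin 9` is block-respecting if it maps each block onto a block. -/
def BlockRespecting (σ : Equiv.Perm (Fin 9)) : Prop :=
  ∀ k : Fin 3, ∃ l : Fin 3, ⇑σ '' sBlock k = sBlock l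

/-- Row permutation as a permutation of index pairs. -/
def Rp (σ : Equiv.Perm (Fin 9)) : Equiv.Perm (Fin 9 × Fin 9) :=
  σ.prodCongr (Equiv.refl (Fin 9))

/-- Column permutation as a permutation of index pairs. -/
def Cp (σ : Equiv.Perm (Fin 9)) : Equiv.Perm (Fin 9 × Fin 9) :=
  (Equiv.refl (Fin 9)).prodCongr σ

/-- Transposition as a permutation of index pairs. -/
def dp : Equiv.Perm (Fin 9 × Fin 9) := Equiv.prodComm (Fin 9) (Fin 9)

/-- Generators of the Sudoku symmetry group: block-respecting row permutations
together with transposition. -/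
def sudokuGen : Set (Equiv.Perm (Fin 9 × Fin 9)) :=
  {e | ∃ σ : Equiv.Perm (Fin 9), BlockRespecting σ ∧ e = Rp σ} ∪ {dp}

/-!
Identify `Fin 9` with `Fin 3 × Fin 3` (block, position in block). A block-respecting
permutation is then a permutation `π` of the blocks together with, for every block, a
permutation of its positions, so `|G| = 3! · (3!)³ = 6⁴`. Conjugating a row permutation by the
transposition `d` gives the corresponding column permutation, and `d` swaps row and column
permutations, so the generated group consists of the products `R_σ C_τ dᵇ` with `σ, τ ∈ G`,
`b ∈ {0, 1}`; these are pairwise distinct as soon as the index type has two elements.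
-/

open Equiv Function
open scoped Nat

namespace Equiv.Perm

variable {α β ι : Type*}

def fiberRespecting (f : α → ι) : Subgroup (Perm α) where
  carrier := {σ | ∃ π : Perm ι, Semiconj f σ π}
  one_mem' := ⟨1, fun _ => rfl⟩
  mul_mem' := fun ⟨π, h⟩ ⟨ρ, h'⟩ => ⟨π * ρ, h.comp_right h'⟩
  inv_mem' := fun {σ} ⟨π, h⟩ => ⟨π⁻¹, h.inverses_right σ.right_inv π.left_inv⟩

theorem mem_fiberRespecting {f : α → ι} {σ : Perm α} :
    σ ∈ fiberRespecting f ↔ ∃ π : Perm ι, Semiconj f σ π :=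
  Iff.rfl

theorem mem_fiberRespecting_iff_image_preimage [Finite ι] {f : α → ι} (hf : Surjective f)
    {σ : Perm α} : σ ∈ fiberRespecting f ↔ ∀ k, ∃ l, σ '' (f ⁻¹' {k}) = f ⁻¹' {l} := by
  constructor
  · rintro ⟨π, h⟩ k
    refine ⟨π k, ?_⟩
    ext y
    simp only [σ.image_eq_preimage_symm, Set.mem_preimage, Set.mem_singleton_iff]
    rw [← π.injective.eq_iff, ← h, apply_symm_apply]
  · intro h
    choose g hg using h
    have hg_inj : Injective g := by
      intro k k' hk
      obtain ⟨x, rfl⟩ := hf k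
      have : f ⁻¹' {f x} = f ⁻¹' {k'} := by
        rw [← Set.image_eq_image σ.injective, hg, hg, hk]
      exact (this.subset rfl : f x = k')
    refine ⟨Equiv.ofBijective g hg_inj.bijective_of_finite, fun x => ?_⟩
    have : σ x ∈ σ '' (f ⁻¹' {f x}) := Set.mem_image_of_mem σ rfl
    rwa [hg] at this

theorem card_fiberRespecting_comp_equiv (f : β → ι) (e : α ≃ β) :
    Nat.card (fiberRespecting (f ∘ e)) = Nat.card (fiberRespecting f) := by
  refine Nat.card_congr (e.permCongr.subtypeEquiv fun σ => ?_)
  simp only [mem_fiberRespecting, Semiconj, ← e.forall_congr_right, permCongr_apply, comp_apply,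
    symm_apply_apply]

theorem card_fiberRespecting_fst [Finite ι] [Finite β] [Nonempty β] :
    Nat.card (fiberRespecting (Prod.fst : ι × β → ι)) =
      (Nat.card ι)! * (Nat.card β)! ^ Nat.card ι := by
  let shear : Perm ι × (ι → Perm β) → fiberRespecting (Prod.fst : ι × β → ι) :=
    fun p => ⟨prodShear p.1 p.2, p.1, fun _ => rfl⟩
  have shear_bijective : Bijective shear := by
    refine ⟨fun ⟨π, g⟩ ⟨π', g'⟩ h => ?_, fun ⟨σ, π, h⟩ => ?_⟩
    · have h (a : ι) (b : β) := congr($(congrArg Subtype.val h) (a, b))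
      obtain ⟨b⟩ := ‹Nonempty β›
      simp only [shear, prodShear_apply, Prod.mk.injEq] at h
      exact Prod.ext (Equiv.ext fun a => (h a b).1) (funext fun a => Equiv.ext fun b => (h a b).2)
    · have fiber_injective (a : ι) : Injective fun b => (σ (a, b)).2 := fun b b' hb =>
        (Prod.mk.inj (σ.injective (Prod.ext ((h (a, b)).trans (h (a, b')).symm) hb))).2
      refine ⟨(π, fun a => ofBijective _ (fiber_injective a).bijective_of_finite), ?_⟩
      exact Subtype.ext (Equiv.ext fun p => Prod.ext (h p).symm rfl)
  rw [← Nat.card_eq_of_bijective shear shear_bijective, Nat.card_prod, Nat.card_fun,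
    Nat.card_perm, Nat.card_perm]

def prodCongrComm (σ τ : Perm α) (b : Bool) : Perm (α × α) :=
  σ.prodCongr τ * cond b (prodComm α α) 1

theorem prodCongrComm_apply (σ τ : Perm α) (b : Bool) (x y : α) :
    prodCongrComm σ τ b (x, y) = cond b (σ y, τ x) (σ x, τ y) := by
  cases b <;> rfl

theorem prodCongrComm_mul (σ τ σ' τ' : Perm α) (b b' : Bool) :
    prodCongrComm σ τ b * prodCongrComm σ' τ' b' =
      prodCongrComm (σ * cond b τ' σ') (τ * cond b σ' τ') (b ^^ b') := by
  cases b <;> cases b' <;> rfl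

theorem prodCongrComm_injective [Nontrivial α] :
    Injective fun p : (Perm α × Perm α) × Bool => prodCongrComm p.1.1 p.1.2 p.2 := by
  rintro ⟨⟨σ, τ⟩, b⟩ ⟨⟨σ', τ'⟩, b'⟩ h
  have h (x y : α) := congr($h (x, y))
  obtain ⟨x, y, hxy⟩ := exists_pair_ne α
  cases b <;> cases b' <;> simp only [prodCongrComm_apply, cond, Prod.mk.injEq] at h
  case false.true => exact absurd (σ.injective ((h x y).1.trans (h y y).1.symm)) hxy
  case true.false => exact absurd (σ.injective ((h x x).1.trans (h x y).1.symm)) hxy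
  all_goals
    congr
    exacts [Equiv.ext fun x => (h x x).1, Equiv.ext fun x => (h x x).2]

theorem prodCongrComm_eq (σ τ : Perm α) (b : Bool) :
    prodCongrComm σ τ b = σ.prodCongr (Equiv.refl α) *
      (prodComm α α * τ.prodCongr (Equiv.refl α) * prodComm α α) * cond b (prodComm α α) 1 := by
  cases b <;> rfl

theorem coe_closure_prodCongr_refl_union_prodComm (G : Subgroup (Perm α)) :
    (Subgroup.closure ({e | ∃ σ ∈ G, e = σ.prodCongr (Equiv.refl α)} ∪ {prodComm α α}) :
        Set (Perm (α × α))) =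
      Set.range fun p : (G × G) × Bool => prodCongrComm (p.1.1 : Perm α) p.1.2 p.2 := by
  set gens := {e | ∃ σ ∈ G, e = σ.prodCongr (Equiv.refl α)} ∪ {prodComm α α}
  have cond_mem (b : Bool) {σ τ : Perm α} (hσ : σ ∈ G) (hτ : τ ∈ G) : cond b σ τ ∈ G := by
    cases b <;> assumption
  ext e
  constructor
  · intro he
    induction he using Subgroup.closure_induction'' with
    | mem e he =>
      rcases he with ⟨σ, hσ, rfl⟩ | rfl
      exacts [⟨((⟨σ, hσ⟩, 1), false), rfl⟩, ⟨((1, 1), true), rfl⟩]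
    | inv_mem e he =>
      rcases he with ⟨σ, hσ, rfl⟩ | rfl
      exacts [⟨((⟨σ⁻¹, inv_mem hσ⟩, 1), false), rfl⟩, ⟨((1, 1), true), rfl⟩]
    | one => exact ⟨((1, 1), false), rfl⟩
    | mul _ _ _ _ he he' =>
      obtain ⟨⟨⟨⟨σ, hσ⟩, ⟨τ, hτ⟩⟩, b⟩, rfl⟩ := he
      obtain ⟨⟨⟨⟨σ', hσ'⟩, ⟨τ', hτ'⟩⟩, b'⟩, rfl⟩ := he'
      exact ⟨((⟨_, mul_mem hσ (cond_mem b hτ' hσ')⟩, ⟨_, mul_mem hτ (cond_mem b hσ' hτ')⟩),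
        b ^^ b'), (prodCongrComm_mul ..).symm⟩
  · rintro ⟨⟨⟨⟨σ, hσ⟩, ⟨τ, hτ⟩⟩, b⟩, rfl⟩
    have row_mem {ρ : Perm α} (hρ : ρ ∈ G) : ρ.prodCongr (Equiv.refl α) ∈ Subgroup.closure gens :=
      Subgroup.subset_closure (Or.inl ⟨ρ, hρ, rfl⟩)
    have comm_mem : prodComm α α ∈ Subgroup.closure gens := Subgroup.subset_closure (Or.inr rfl)
    change prodCongrComm σ τ b ∈ Subgroup.closure gens
    rw [prodCongrComm_eq]
    refine mul_mem (mul_mem (row_mem hσ) (mul_mem (mul_mem comm_mem (row_mem hτ)) comm_mem)) ?_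
    cases b
    exacts [one_mem _, comm_mem]

theorem card_closure_prodCongr_refl_union_prodComm [Nontrivial α] (G : Subgroup (Perm α)) :
    Nat.card (Subgroup.closure
        ({e | ∃ σ ∈ G, e = σ.prodCongr (Equiv.refl α)} ∪ {prodComm α α})) =
      2 * Nat.card G ^ 2 := by
  have := Nat.card_congr (Equiv.setCongr (coe_closure_prodCongr_refl_union_prodComm G))
  rw [SetLike.coe_sort_coe] at this
  rw [this, Nat.card_range_of_injective, Nat.card_prod, Nat.card_prod,
    Nat.card_eq_fintype_card (α := Bool), Fintype.card_bool]
  · ring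
  · exact prodCongrComm_injective.comp
      ((Subtype.val_injective.prodMap Subtype.val_injective).prodMap injective_id)

end Equiv.Perm

open Equiv.Perm

def blockCoords : Fin 9 ≃ Fin 3 × Fin 3 := (finProdFinEquiv (m := 3) (n := 3)).symm

theorem sBlock_eq_preimage (k : Fin 3) : sBlock k = (Prod.fst ∘ blockCoords) ⁻¹' {k} := by
  ext x
  simp [sBlock, blockCoords, finProdFinEquiv, Fin.divNat, Fin.ext_iff]

theorem blockRespecting_iff_mem_fiberRespecting {σ : Perm (Fin 9)} :
    BlockRespecting σ ↔ σ ∈ fiberRespecting (Prod.fst ∘ blockCoords) := by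
  rw [mem_fiberRespecting_iff_image_preimage (Prod.fst_surjective.comp blockCoords.surjective)]
  simp only [BlockRespecting, sBlock_eq_preimage]

theorem card_fiberRespecting_fst_comp_blockCoords :
    Nat.card (fiberRespecting (Prod.fst ∘ blockCoords)) = 6 ^ 4 := by
  rw [card_fiberRespecting_comp_equiv, card_fiberRespecting_fst]
  simp [Nat.factorial]

theorem sudokuGen_eq : sudokuGen = {e | ∃ σ ∈ fiberRespecting (Prod.fst ∘ blockCoords),
    e = σ.prodCongr (Equiv.refl _)} ∪ {prodComm _ _} := by
  simp only [sudokuGen, Rp, dp, blockRespecting_iff_mem_fiberRespecting]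

/-- The Sudoku symmetry group has order `2 · 6⁸`. -/
theorem sudoku_symmetry_group_card :
    Nat.card (Subgroup.closure sudokuGen) = 2 * 6 ^ 8 := by
  rw [sudokuGen_eq, card_closure_prodCongr_refl_union_prodComm,
    card_fiberRespecting_fst_comp_blockCoords]
  norm_num
end

section
/- Every element of the Sudoku symmetry group S (generated by transposition d and row transformations R_r, r ∈ G) can be written in one of the eight forms: id, d, R_r, R_r·d, d·R_r, d·R_r·d, R_s·d·R_t, or R_s·d·R_t·d with r,s,t ∈ G \ {id}; moreover these eight families are pairwise disjoint. -/
/-- The eight families of elements of the Sudoku symmetry group: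
`id`, `d`, `R_r`, `R_r·d`, `d·R_r`, `d·R_r·d`, `R_s·d·R_t`, `R_s·d·R_t·d`
with the row permutations nontrivial and block-respecting. -/
def sudokuFamily : Fin 8 → Set (Equiv.Perm (Fin 9 × Fin 9)) :=
  ![{1}, {dp},
    {x | ∃ r, BlockRespecting r ∧ r ≠ 1 ∧ x = Rp r},
    {x | ∃ r, BlockRespecting r ∧ r ≠ 1 ∧ x = Rp r * dp},
    {x | ∃ r, BlockRespecting r ∧ r ≠ 1 ∧ x = dp * Rp r},
    {x | ∃ r, BlockRespecting r ∧ r ≠ 1 ∧ x = dp * Rp r * dp},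
    {x | ∃ s t, BlockRespecting s ∧ BlockRespecting t ∧ s ≠ 1 ∧ t ≠ 1 ∧
      x = Rp s * dp * Rp t},
    {x | ∃ s t, BlockRespecting s ∧ BlockRespecting t ∧ s ≠ 1 ∧ t ≠ 1 ∧
      x = Rp s * dp * Rp t * dp}]

/-- Normal form: `R_s · C_t · d^ε`. -/
def Np (s t : Equiv.Perm (Fin 9)) (ε : Bool) : Equiv.Perm (Fin 9 × Fin 9) :=
  Rp s * Cp t * (cond ε dp 1)

lemma Np_false_apply (s t : Equiv.Perm (Fin 9)) (p : Fin 9 × Fin 9) :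
    Np s t false p = (s p.1, t p.2) := rfl

lemma Np_true_apply (s t : Equiv.Perm (Fin 9)) (p : Fin 9 × Fin 9) :
    Np s t true p = (s p.2, t p.1) := rfl

lemma Np_mul (s t s' t' : Equiv.Perm (Fin 9)) (ε ε' : Bool) :
    Np s t ε * Np s' t' ε' = Np (s * cond ε t' s') (t * cond ε s' t') (xor ε ε') := by
  cases ε <;> cases ε' <;> exact Equiv.ext fun p => rfl

lemma Np_one : Np 1 1 false = 1 := Equiv.ext fun p => rfl

lemma Np_inv (s t : Equiv.Perm (Fin 9)) (ε : Bool) :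
    (Np s t ε)⁻¹ = Np (cond ε t⁻¹ s⁻¹) (cond ε s⁻¹ t⁻¹) ε := by
  symm
  apply eq_inv_of_mul_eq_one_left
  cases ε <;> simp [Np_mul, Np_one]

lemma Np_injective :
    ∀ {s t s' t' : Equiv.Perm (Fin 9)} {ε ε' : Bool},
      Np s t ε = Np s' t' ε' → s = s' ∧ t = t' ∧ ε = ε' := by
  have key : ∀ (s t s' t' : Equiv.Perm (Fin 9)),
      Np s t false = Np s' t' true → False := by
    intro s t s' t' h
    have h0 := Equiv.ext_iff.mp h (0, 0)
    have h1 := Equiv.ext_iff.mp h (0, 1)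
    rw [Np_false_apply, Np_true_apply] at h0 h1
    have e0 : s 0 = s' 0 := congrArg Prod.fst h0
    have e1 : s 0 = s' 1 := congrArg Prod.fst h1
    have : s' 0 = s' 1 := e0 ▸ e1
    exact absurd (s'.injective this) (by decide)
  intro s t s' t' ε ε' h
  cases ε <;> cases ε'
  · refine ⟨Equiv.ext fun i => ?_, Equiv.ext fun j => ?_, rfl⟩
    · exact congrArg Prod.fst (Equiv.ext_iff.mp h (i, 0))
    · exact congrArg Prod.snd (Equiv.ext_iff.mp h (0, j))
  · exact (key _ _ _ _ h).elim
  · exact (key _ _ _ _ h.symm).elim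
  · refine ⟨Equiv.ext fun i => ?_, Equiv.ext fun j => ?_, rfl⟩
    · exact congrArg Prod.fst (Equiv.ext_iff.mp h (0, i))
    · exact congrArg Prod.snd (Equiv.ext_iff.mp h (j, 0))

lemma sBlock_inj {k k' : Fin 3} (h : sBlock k = sBlock k') : k = k' := by
  have hm : (⟨3 * (k : ℕ), by omega⟩ : Fin 9) ∈ sBlock k :=
    show (3 * (k : ℕ)) / 3 = (k : ℕ) by omega
  rw [h] at hm
  simp only [sBlock, Set.mem_setOf_eq] at hm
  have : (3 * (k : ℕ)) / 3 = (k : ℕ) := by omega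
  exact Fin.ext (by omega)

lemma BR_one : BlockRespecting 1 := fun k => ⟨k, by simp⟩

lemma BR_mul {σ τ : Equiv.Perm (Fin 9)} (hσ : BlockRespecting σ)
    (hτ : BlockRespecting τ) : BlockRespecting (σ * τ) := by
  intro k
  obtain ⟨l, hl⟩ := hτ k
  obtain ⟨m, hm⟩ := hσ l
  refine ⟨m, ?_⟩
  have : ⇑(σ * τ) = ⇑σ ∘ ⇑τ := rfl
  rw [this, Set.image_comp, hl, hm]

lemma BR_inv {σ : Equiv.Perm (Fin 9)} (hσ : BlockRespecting σ) :
    BlockRespecting σ⁻¹ := by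
  classical
  choose f hf using hσ
  have hinj : Function.Injective f := by
    intro k k' h
    have h2 : ⇑σ '' sBlock k = ⇑σ '' sBlock k' := by rw [hf k, hf k', h]
    exact sBlock_inj ((Set.image_eq_image σ.injective).mp h2)
  have hsurj : Function.Surjective f := Finite.surjective_of_injective hinj
  intro k
  obtain ⟨k', hk'⟩ := hsurj k
  refine ⟨k', ?_⟩
  rw [← hk', ← hf k']
  have : ⇑σ⁻¹ = ⇑σ.symm := rfl
  rw [this, Equiv.symm_image_image]

/-- Each normal form with block-respecting parts lies in some family. -/
lemma Np_mem_family {s t : Equiv.Perm (Fin 9)} (ε : Bool)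
    (hs : BlockRespecting s) (ht : BlockRespecting t) :
    ∃ i : Fin 8, Np s t ε ∈ sudokuFamily i := by
  by_cases h1 : s = 1 <;> by_cases h2 : t = 1 <;> cases ε
  · exact ⟨0, by subst h1 h2; rw [show Np 1 1 false = 1 from rfl]; rfl⟩
  · exact ⟨1, by subst h1 h2; rw [show Np 1 1 true = dp from Equiv.ext fun p => rfl]; rfl⟩
  · exact ⟨5, ⟨t, ht, h2, by subst h1; exact Equiv.ext fun p => rfl⟩⟩
  · exact ⟨4, ⟨t, ht, h2, by subst h1; exact Equiv.ext fun p => rfl⟩⟩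
  · exact ⟨2, ⟨s, hs, h1, by subst h2; exact Equiv.ext fun p => rfl⟩⟩
  · exact ⟨3, ⟨s, hs, h1, by subst h2; exact Equiv.ext fun p => rfl⟩⟩
  · exact ⟨7, ⟨s, t, hs, ht, h1, h2, Equiv.ext fun p => rfl⟩⟩
  · exact ⟨6, ⟨s, t, hs, ht, h1, h2, Equiv.ext fun p => rfl⟩⟩

/-- The profile of each family: (s = 1?, t = 1?, ε). -/
def sKey : Fin 8 → Bool × Bool × Bool :=
  ![(true, true, false), (true, true, true), (false, true, false), (false, true, true),
    (true, false, true), (true, false, false), (false, false, true), (false, false, false)]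

lemma mem_family_key {i : Fin 8} {x : Equiv.Perm (Fin 9 × Fin 9)}
    (h : x ∈ sudokuFamily i) :
    ∃ s t ε, x = Np s t ε ∧ ((s = 1) ↔ (sKey i).1 = true) ∧
      ((t = 1) ↔ (sKey i).2.1 = true) ∧ ε = (sKey i).2.2 := by
  fin_cases i
  · refine ⟨1, 1, false, ?_, ⟨fun _ => by decide, fun _ => rfl⟩,
      ⟨fun _ => by decide, fun _ => rfl⟩, by decide⟩
    rw [show x = 1 from h]; rfl
  · refine ⟨1, 1, true, ?_, ⟨fun _ => by decide, fun _ => rfl⟩,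
      ⟨fun _ => by decide, fun _ => rfl⟩, by decide⟩
    rw [show x = dp from h]; exact Equiv.ext fun p => rfl
  · obtain ⟨r, _, hr, hx⟩ := h
    exact ⟨r, 1, false, by rw [hx]; exact Equiv.ext fun p => rfl,
      ⟨fun h => absurd h hr, fun h => absurd h (by decide)⟩,
      ⟨fun _ => by decide, fun _ => rfl⟩, by decide⟩
  · obtain ⟨r, _, hr, hx⟩ := h
    exact ⟨r, 1, true, by rw [hx]; exact Equiv.ext fun p => rfl,
      ⟨fun h => absurd h hr, fun h => absurd h (by decide)⟩,
      ⟨fun _ => by decide, fun _ => rfl⟩, by decide⟩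
  · obtain ⟨r, _, hr, hx⟩ := h
    exact ⟨1, r, true, by rw [hx]; exact Equiv.ext fun p => rfl,
      ⟨fun _ => by decide, fun _ => rfl⟩,
      ⟨fun h => absurd h hr, fun h => absurd h (by decide)⟩, by decide⟩
  · obtain ⟨r, _, hr, hx⟩ := h
    exact ⟨1, r, false, by rw [hx]; exact Equiv.ext fun p => rfl,
      ⟨fun _ => by decide, fun _ => rfl⟩,
      ⟨fun h => absurd h hr, fun h => absurd h (by decide)⟩, by decide⟩
  · obtain ⟨s, t, _, _, hs, ht, hx⟩ := h
    exact ⟨s, t, true, by rw [hx]; exact Equiv.ext fun p => rfl,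
      ⟨fun h => absurd h hs, fun h => absurd h (by decide)⟩,
      ⟨fun h => absurd h ht, fun h => absurd h (by decide)⟩, by decide⟩
  · obtain ⟨s, t, _, _, hs, ht, hx⟩ := h
    exact ⟨s, t, false, by rw [hx]; exact Equiv.ext fun p => rfl,
      ⟨fun h => absurd h hs, fun h => absurd h (by decide)⟩,
      ⟨fun h => absurd h ht, fun h => absurd h (by decide)⟩, by decide⟩

lemma sKey_injective : Function.Injective sKey := by decide

/-- Every element of the Sudoku symmetry group lies in one of the eight families,
and the families are pairwise disjoint. -/
theorem sudoku_eight_families :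
    (∀ x : Equiv.Perm (Fin 9 × Fin 9), x ∈ Subgroup.closure sudokuGen →
      ∃ i : Fin 8, x ∈ sudokuFamily i) ∧
    (∀ i j : Fin 8, i ≠ j → Disjoint (sudokuFamily i) (sudokuFamily j)) := by
  constructor
  · intro x hx
    have hU : ∃ s t ε, BlockRespecting s ∧ BlockRespecting t ∧ x = Np s t ε := by
      refine Subgroup.closure_induction (k := sudokuGen)
        (p := fun x _ => ∃ s t ε, BlockRespecting s ∧ BlockRespecting t ∧ x = Np s t ε)
        ?_ ?_ ?_ ?_ hx
      · rintro y (⟨σ, hσ, rfl⟩ | hy)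
        · exact ⟨σ, 1, false, hσ, BR_one, Equiv.ext fun p => rfl⟩
        · refine ⟨1, 1, true, BR_one, BR_one, ?_⟩
          rw [show y = dp from hy]; exact Equiv.ext fun p => rfl
      · exact ⟨1, 1, false, BR_one, BR_one, Np_one.symm⟩
      · rintro a b _ _ ⟨s, t, ε, hs, ht, rfl⟩ ⟨s', t', ε', hs', ht', rfl⟩
        refine ⟨s * cond ε t' s', t * cond ε s' t', xor ε ε', ?_, ?_, Np_mul ..⟩
        · cases ε
          · exact BR_mul hs hs'
          · exact BR_mul hs ht'
        · cases ε
          · exact BR_mul ht ht'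
          · exact BR_mul ht hs'
      · rintro a _ ⟨s, t, ε, hs, ht, rfl⟩
        refine ⟨cond ε t⁻¹ s⁻¹, cond ε s⁻¹ t⁻¹, ε, ?_, ?_, Np_inv ..⟩
        · cases ε
          · exact BR_inv hs
          · exact BR_inv ht
        · cases ε
          · exact BR_inv ht
          · exact BR_inv hs
    obtain ⟨s, t, ε, hs, ht, rfl⟩ := hU
    exact Np_mem_family ε hs ht
  · intro i j hij
    rw [Set.disjoint_left]
    intro x hxi hxj
    obtain ⟨s, t, ε, rfl, hs1, ht1, he1⟩ := mem_family_key hxi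
    obtain ⟨s', t', ε', heq, hs2, ht2, he2⟩ := mem_family_key hxj
    obtain ⟨rfl, rfl, rfl⟩ := Np_injective heq
    apply hij
    apply sKey_injective
    have e1 : (sKey i).1 = (sKey j).1 := by
      rcases Bool.eq_false_or_eq_true (sKey i).1 with h | h <;>
        rcases Bool.eq_false_or_eq_true (sKey j).1 with h' | h' <;>
          simp_all
    have e2 : (sKey i).2.1 = (sKey j).2.1 := by
      rcases Bool.eq_false_or_eq_true (sKey i).2.1 with h | h <;>
        rcases Bool.eq_false_or_eq_true (sKey j).2.1 with h' | h' <;>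
          simp_all
    have e3 : (sKey i).2.2 = (sKey j).2.2 := he1 ▸ he2
    exact Prod.ext e1 (Prod.ext e2 e3)
end
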